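/- Let s ≥ 2 and suppose there exists a projective plane of order s, i.e., a Steiner system S(2, s+1, s²+s+1). Then the smallest integer q for which an (s²+s+1, s²+s+1, s², s²+s)_q code exists equals s² + 1. (Here the code cardinality s²+s+1 equals C(s²+s+1,2)/C(s+1,2), the weight is s² = (s²+s+1)−(s+1), and the distance is s²+s = (s²+s+1)−2+1.) -/
import Mathlib

open Finset

/-- The support of a word over the alphabet `{0, ..., q-1}` (represented as
naturals below `q`): the set of coordinates with nonzero entries. -/
def suppN {n : ℕ} (x : Fin n → ℕ) : Finset (Fin n) :=
  Finset.univ.filter (fun i => x i ≠ 0)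

/-- An `(n, M, w, d)_q` constant-weight code. -/
def IsCWCode (n M w d q : ℕ) (C : Finset (Fin n → ℕ)) : Prop :=
  C.card = M ∧ (∀ x ∈ C, ∀ i, x i < q) ∧ (∀ x ∈ C, (suppN x).card = w) ∧
  ∀ x ∈ C, ∀ y ∈ C, x ≠ y → d ≤ hammingDist x y

lemma convex_nat (a b : ℕ) : (2*b+1)*a ≤ a*a + b*(b+1) := by
  rcases le_total a b with h|h
  · nlinarith
  · obtain ⟨d, rfl⟩ := Nat.exists_eq_add_of_le h
    have hd : d ≤ d * d := by
      rcases Nat.eq_zero_or_pos d with h1|h1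
      · simp [h1]
      · exact Nat.le_mul_of_pos_left _ h1
    nlinarith

lemma fin_arith (t q : ℕ) (h1 : t ≤ q - 1) (h2 : 4 ≤ t) : t + 1 ≤ q := by omega

lemma lower_bound (s q : ℕ) (hs : 2 ≤ s)
    (C : Finset (Fin (s ^ 2 + s + 1) → ℕ))
    (hC : IsCWCode (s ^ 2 + s + 1) (s ^ 2 + s + 1) (s ^ 2) (s ^ 2 + s) q C) :
    s ^ 2 + 1 ≤ q := by
  obtain ⟨hcard, hlt, hwt, hdist⟩ := hC
  have hcardu : (univ : Finset (Fin (s ^ 2 + s + 1))).card = s ^ 2 + s + 1 := by simp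
  -- each pair of distinct codewords agrees in at most one coordinate
  have hagree : ∀ x ∈ C, ∀ y ∈ C, x ≠ y →
      (univ.filter fun i => x i = y i).card ≤ 1 := by
    intro x hx y hy hxy
    have h1 := Finset.card_filter_add_card_filter_not
      (s := (univ : Finset (Fin (s ^ 2 + s + 1)))) (p := fun i => x i = y i)
    have h2 : (univ.filter fun i => ¬ x i = y i).card = hammingDist x y := rfl
    have h3 := hdist x hx y hy hxy
    omega
  -- each codeword has exactly s+1 zero coordinates
  have hzero : ∀ x ∈ C, (univ.filter fun i => x i = 0).card = s + 1 := by
    intro x hx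
    have h1 := Finset.card_filter_add_card_filter_not
      (s := (univ : Finset (Fin (s ^ 2 + s + 1)))) (p := fun i => x i ≠ 0)
    have h2 : (univ.filter fun i => ¬ x i ≠ 0) = univ.filter fun i => x i = 0 := by
      simp [not_not]
    have h3 := hwt x hx
    have h4 : suppN x = univ.filter fun i => x i ≠ 0 := rfl
    rw [h4] at h3
    rw [h2] at h1
    omega
  obtain ⟨z, hz⟩ : ∃ z : Fin (s ^ 2 + s + 1) → ℕ,
      ∀ i, z i = (C.filter fun x => x i = 0).card := ⟨_, fun _ => rfl⟩
  obtain ⟨A, hA⟩ : ∃ A : Fin (s ^ 2 + s + 1) → ℕ,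
      ∀ i, A i = (C.offDiag.filter fun p => p.1 i = p.2 i).card := ⟨_, fun _ => rfl⟩
  obtain ⟨N, hN⟩ : ∃ N : Fin (s ^ 2 + s + 1) → ℕ,
      ∀ i, N i = ((C.offDiag.filter fun p => p.1 i = p.2 i).filter
        fun p => ¬ p.1 i = 0).card := ⟨_, fun _ => rfl⟩
  have hsumz : ∑ i, z i = (s ^ 2 + s + 1) * (s + 1) := by
    calc ∑ i, z i = ∑ i, ∑ x ∈ C, if x i = 0 then 1 else 0 := by
          refine Finset.sum_congr rfl fun i _ => ?_
          rw [hz i]; exact Finset.card_filter _ _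
      _ = ∑ x ∈ C, ∑ i, if x i = 0 then 1 else 0 := Finset.sum_comm
      _ = ∑ x ∈ C, (s+1) := by
          refine Finset.sum_congr rfl fun x hx => ?_
          rw [← Finset.card_filter]; exact hzero x hx
      _ = (s ^ 2 + s + 1) * (s+1) := by rw [Finset.sum_const, hcard, smul_eq_mul]
  have hsumA : ∑ i, A i ≤ (s ^ 2 + s + 1) * (s ^ 2 + s) := by
    have hoffc : C.offDiag.card = (s ^ 2 + s + 1) * (s ^ 2 + s) := by
      rw [Finset.offDiag_card, hcard]
      have : (s ^ 2 + s + 1) * (s ^ 2 + s + 1) =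
          (s ^ 2 + s + 1) * (s ^ 2 + s) + (s ^ 2 + s + 1) := by ring
      omega
    calc ∑ i, A i
        = ∑ i, ∑ p ∈ C.offDiag, if p.1 i = p.2 i then 1 else 0 := by
          refine Finset.sum_congr rfl fun i _ => ?_
          rw [hA i]; exact Finset.card_filter _ _
      _ = ∑ p ∈ C.offDiag, ∑ i, if p.1 i = p.2 i then 1 else 0 := Finset.sum_comm
      _ ≤ ∑ _p ∈ C.offDiag, 1 := by
          refine Finset.sum_le_sum fun p hp => ?_
          rw [← Finset.card_filter]
          obtain ⟨hx, hy, hxy⟩ := Finset.mem_offDiag.mp hp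
          exact hagree _ hx _ hy hxy
      _ = C.offDiag.card := by simp
      _ = (s ^ 2 + s + 1) * (s ^ 2 + s) := hoffc
  have hAi : ∀ i, z i * z i + N i ≤ A i + z i := by
    intro i
    rw [hz i, hA i, hN i]
    have hsplit := Finset.card_filter_add_card_filter_not
      (s := C.offDiag.filter fun p => p.1 i = p.2 i) (p := fun p => p.1 i = 0)
    have hsub : (C.filter fun x => x i = 0).offDiag ⊆
        (C.offDiag.filter fun p => p.1 i = p.2 i).filter fun p => p.1 i = 0 := by
      intro p hp
      obtain ⟨hx, hy, hxy⟩ := Finset.mem_offDiag.mp hp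
      obtain ⟨hx1, hx2⟩ := Finset.mem_filter.mp hx
      obtain ⟨hy1, hy2⟩ := Finset.mem_filter.mp hy
      simp only [Finset.mem_filter, Finset.mem_offDiag]
      exact ⟨⟨⟨hx1, hy1, hxy⟩, by rw [hx2, hy2]⟩, hx2⟩
    have hcardsub := Finset.card_le_card hsub
    have hoff : (C.filter fun x => x i = 0).offDiag.card =
        (C.filter fun x => x i = 0).card * (C.filter fun x => x i = 0).card -
          (C.filter fun x => x i = 0).card := Finset.offDiag_card _
    have hle : (C.filter fun x => x i = 0).card ≤
        (C.filter fun x => x i = 0).card * (C.filter fun x => x i = 0).card := by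
      rcases Nat.eq_zero_or_pos (C.filter fun x => x i = 0).card with h1|h1
      · simp [h1]
      · exact Nat.le_mul_of_pos_left _ h1
    have key : (C.filter fun x => x i = 0).offDiag.card + (C.filter fun x => x i = 0).card =
        (C.filter fun x => x i = 0).card * (C.filter fun x => x i = 0).card := by
      rw [hoff]; exact Nat.sub_add_cancel hle
    linarith [key, hcardsub, hsplit]
  -- sum everything
  have hmain : ∑ i, (z i * z i) + ∑ i, N i ≤
      (s ^ 2 + s + 1) * (s ^ 2 + s) + (s ^ 2 + s + 1) * (s + 1) := by
    have h1 : ∑ i, (z i * z i + N i) ≤ ∑ i, (A i + z i) :=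
      Finset.sum_le_sum fun i _ => hAi i
    rw [Finset.sum_add_distrib, Finset.sum_add_distrib] at h1
    have := Nat.add_le_add hsumA (le_of_eq hsumz)
    omega
  -- convexity
  have hconv : (2*s+1) * ((s ^ 2 + s + 1) * (s + 1)) ≤
      ∑ i, (z i * z i) + (s ^ 2 + s + 1) * (s * (s+1)) := by
    have h1 : ∑ i, ((2*s+1) * z i) ≤ ∑ i, (z i * z i + s * (s+1)) :=
      Finset.sum_le_sum fun i _ => convex_nat (z i) s
    rw [Finset.sum_add_distrib, Finset.sum_const, hcardu, smul_eq_mul] at h1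
    rw [← Finset.mul_sum, hsumz] at h1
    exact h1
  have e1 : (2*s+1) * ((s^2+s+1)*(s+1)) =
      (s^2+s+1)*(s*(s+1)) + (s^2+s+1)*(s+1)*(s+1) := by ring
  have e2 : (s^2+s+1)*(s^2+s) + (s^2+s+1)*(s+1) = (s^2+s+1)*(s+1)*(s+1) := by ring
  have hzge : (s^2+s+1)*(s+1)*(s+1) ≤ ∑ i, (z i * z i) := by linarith
  have hNsum : ∑ i, N i = 0 := by
    have h1 : ∑ i, (z i * z i) + ∑ i, N i ≤ (s^2+s+1)*(s+1)*(s+1) := by linarith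
    omega
  have hzsum : ∑ i, (z i * z i) = (s ^ 2 + s + 1) * (s+1) * (s+1) := by
    have h1 : ∑ i, (z i * z i) + ∑ i, N i ≤ (s^2+s+1)*(s+1)*(s+1) := by linarith
    omega
  -- each N i = 0
  have hN0 : ∀ i, N i = 0 := fun i =>
    (Finset.sum_eq_zero_iff_of_nonneg (fun i _ => Nat.zero_le (N i))).mp hNsum i
      (Finset.mem_univ i)
  -- tightness of convexity: z i ≤ s + 1 for every i
  have hzle : ∀ i, z i ≤ s + 1 := by
    have heqsum : ∑ i, ((2*s+1) * z i) = ∑ i, (z i * z i + s * (s+1)) := by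
      rw [Finset.sum_add_distrib, Finset.sum_const, hcardu, smul_eq_mul,
        ← Finset.mul_sum, hsumz, hzsum]
      ring
    have hpt := (Finset.sum_eq_sum_iff_of_le (fun i _ => convex_nat (z i) s)).mp heqsum
    intro i
    have heq := hpt i (Finset.mem_univ i)
    by_contra hlt2
    push_neg at hlt2
    have hge2 : s + 2 ≤ z i := hlt2
    obtain ⟨d, hd⟩ := Nat.exists_eq_add_of_le hge2
    rw [hd] at heq
    nlinarith [heq]
  -- now work at coordinate 0
  have hpos : 0 < s ^ 2 + s + 1 := by positivity
  obtain ⟨i0⟩ : Nonempty (Fin (s ^ 2 + s + 1)) := ⟨⟨0, hpos⟩⟩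
  obtain ⟨S, hS⟩ : ∃ S, S = C.filter fun x => ¬ x i0 = 0 := ⟨_, rfl⟩
  have hScard : S.card + z i0 = s ^ 2 + s + 1 := by
    have h1 := Finset.card_filter_add_card_filter_not
      (s := C) (p := fun x => x i0 = 0)
    rw [hcard] at h1
    rw [hS, hz i0]
    linarith [h1]
  -- the map x ↦ x i0 is injective on S
  have hinj : Set.InjOn (fun x : Fin (s ^ 2 + s + 1) → ℕ => x i0) S := by
    intro x hx y hy hxy
    by_contra hne
    have hx' := Finset.mem_filter.mp (by rw [← hS]; exact Finset.mem_coe.mp hx)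
    have hy' := Finset.mem_filter.mp (by rw [← hS]; exact Finset.mem_coe.mp hy)
    have hmem : (x, y) ∈ (C.offDiag.filter fun p => p.1 i0 = p.2 i0).filter
        fun p => ¬ p.1 i0 = 0 := by
      simp only [Finset.mem_filter, Finset.mem_offDiag]
      exact ⟨⟨⟨hx'.1, hy'.1, hne⟩, hxy⟩, hx'.2⟩
    have hposN : 0 < N i0 := by
      rw [hN i0]; exact Finset.card_pos.mpr ⟨(x, y), hmem⟩
    rw [hN0 i0] at hposN
    exact lt_irrefl 0 hposN
  have himg : (S.image fun x => x i0).card = S.card := Finset.card_image_of_injOn hinj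
  have hsubIco : (S.image fun x => x i0) ⊆ Finset.Ico 1 q := by
    intro v hv
    obtain ⟨x, hx, rfl⟩ := Finset.mem_image.mp hv
    have hx' := Finset.mem_filter.mp (by rw [← hS]; exact hx)
    rw [Finset.mem_Ico]
    exact ⟨Nat.one_le_iff_ne_zero.mpr hx'.2, hlt x hx'.1 i0⟩
  have hcardIco := Finset.card_le_card hsubIco
  rw [himg, Nat.card_Ico] at hcardIco
  -- S.card ≥ s^2
  have hS2 : s ^ 2 ≤ S.card := by
    have h5 := hzle i0
    have h6 : (s:ℕ) ^ 2 + s + 1 = s ^ 2 + (s + 1) := by ring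
    linarith [hScard]
  exact fin_arith _ _ (le_trans hS2 hcardIco) (by nlinarith)

/-- A Steiner system `S(t, k, n)` on the point set `Fin n`. -/
def IsSteiner {n : ℕ} (t k : ℕ) (B : Finset (Finset (Fin n))) : Prop :=
  (∀ b ∈ B, b.card = k) ∧
  ∀ s : Finset (Fin n), s.card = t → ∃! b, b ∈ B ∧ s ⊆ b

/-- Codeword attached to a block: `0` on the block, elsewhere a rank among
blocks avoiding the coordinate, shifted by one. -/
def pjCodeword {n : ℕ} (B : Finset (Finset (Fin n))) (b : Finset (Fin n)) : Fin n → ℕ :=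
  fun i => if i ∈ b then 0 else
    (B.filter fun c => i ∉ c ∧ Encodable.encode c < Encodable.encode b).card + 1

lemma pjCodeword_eq_zero {n : ℕ} (B : Finset (Finset (Fin n))) (b : Finset (Fin n))
    (i : Fin n) : pjCodeword B b i = 0 ↔ i ∈ b := by
  unfold pjCodeword
  split <;> simp_all

lemma pjCodeword_rank_lt {n : ℕ} (B : Finset (Finset (Fin n))) {b b' : Finset (Fin n)}
    (hb : b ∈ B) (i : Fin n) (hib : i ∉ b) (henc : Encodable.encode b < Encodable.encode b') :
    (B.filter fun c => i ∉ c ∧ Encodable.encode c < Encodable.encode b).card <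
    (B.filter fun c => i ∉ c ∧ Encodable.encode c < Encodable.encode b').card := by
  apply Finset.card_lt_card
  constructor
  · intro c hc
    obtain ⟨hcB, hic, hlt⟩ := Finset.mem_filter.mp hc
    exact Finset.mem_filter.mpr ⟨hcB, hic, hlt.trans henc⟩
  · intro hsup
    have hbmem : b ∈ B.filter fun c => i ∉ c ∧ Encodable.encode c < Encodable.encode b' :=
      Finset.mem_filter.mpr ⟨hb, hib, henc⟩
    have := Finset.mem_filter.mp (hsup hbmem)
    exact lt_irrefl _ this.2.2

-- two distinct blocks in a Steiner system with t = 2 meet in at most one point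
lemma steiner_inter {n k : ℕ} {B : Finset (Finset (Fin n))} (hB : IsSteiner 2 k B)
    {b b' : Finset (Fin n)} (hb : b ∈ B) (hb' : b' ∈ B) (hne : b ≠ b') :
    (b ∩ b').card ≤ 1 := by
  by_contra h
  push_neg at h
  obtain ⟨p, hp, q, hq, hpq⟩ := Finset.one_lt_card.mp h
  have hpair : ({p, q} : Finset (Fin n)).card = 2 := Finset.card_pair hpq
  obtain ⟨u, _, huniq⟩ := hB.2 {p, q} hpair
  have h1 : b = u := huniq b ⟨hb, by
    rw [Finset.insert_subset_iff, Finset.singleton_subset_iff]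
    exact ⟨(Finset.mem_inter.mp hp).1, (Finset.mem_inter.mp hq).1⟩⟩
  have h2 : b' = u := huniq b' ⟨hb', by
    rw [Finset.insert_subset_iff, Finset.singleton_subset_iff]
    exact ⟨(Finset.mem_inter.mp hp).2, (Finset.mem_inter.mp hq).2⟩⟩
  exact hne (h1.trans h2.symm)

lemma steiner_degree (s : ℕ) (hs : 2 ≤ s) (B : Finset (Finset (Fin (s ^ 2 + s + 1))))
    (hB : IsSteiner 2 (s + 1) B) (p : Fin (s ^ 2 + s + 1)) :
    (B.filter fun b => p ∈ b).card = s + 1 := by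
  have hdisj : ∀ b ∈ B.filter (fun b => p ∈ b), ∀ c ∈ B.filter (fun b => p ∈ b), b ≠ c →
      Disjoint (b.erase p) (c.erase p) := by
    intro b hb c hc hne
    rw [Finset.disjoint_left]
    intro a hab hac
    obtain ⟨hbB, hpb⟩ := Finset.mem_filter.mp hb
    obtain ⟨hcB, hpc⟩ := Finset.mem_filter.mp hc
    obtain ⟨hanep, hab'⟩ := Finset.mem_erase.mp hab
    obtain ⟨_, hac'⟩ := Finset.mem_erase.mp hac
    have h2 : 2 ≤ (b ∩ c).card := by
      have hsub : ({a, p} : Finset (Fin (s ^ 2 + s + 1))) ⊆ b ∩ c := by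
        rw [Finset.insert_subset_iff, Finset.singleton_subset_iff]
        exact ⟨Finset.mem_inter.mpr ⟨hab', hac'⟩, Finset.mem_inter.mpr ⟨hpb, hpc⟩⟩
      calc 2 = ({a, p} : Finset (Fin (s ^ 2 + s + 1))).card := (Finset.card_pair hanep).symm
        _ ≤ _ := Finset.card_le_card hsub
    have h3 := steiner_inter hB hbB hcB hne
    linarith
  have hunion : (B.filter (fun b => p ∈ b)).biUnion (fun b => b.erase p) = univ.erase p := by
    ext a
    simp only [Finset.mem_biUnion, Finset.mem_erase, Finset.mem_filter, Finset.mem_univ,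
      and_true]
    constructor
    · rintro ⟨b, ⟨_, hpb⟩, hane, hab⟩
      exact hane
    · intro hane
      have hpair : ({a, p} : Finset (Fin (s ^ 2 + s + 1))).card = 2 := Finset.card_pair hane
      obtain ⟨u, ⟨huB, hsub⟩, _⟩ := hB.2 {a, p} hpair
      rw [Finset.insert_subset_iff, Finset.singleton_subset_iff] at hsub
      exact ⟨u, ⟨huB, hsub.2⟩, hane, hsub.1⟩
  have hcount := Finset.card_biUnion hdisj
  rw [hunion] at hcount
  have hleft : (univ.erase p).card = s ^ 2 + s := by
    rw [Finset.card_erase_of_mem (Finset.mem_univ p), Finset.card_univ]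
    simp
  have hright : ∑ b ∈ B.filter (fun b => p ∈ b), (b.erase p).card =
      (B.filter (fun b => p ∈ b)).card * s := by
    rw [Finset.sum_congr rfl (fun b hb => ?_), Finset.sum_const, smul_eq_mul]
    obtain ⟨hbB, hpb⟩ := Finset.mem_filter.mp hb
    rw [Finset.card_erase_of_mem hpb, hB.1 b hbB]
    simp
  rw [hleft, hright] at hcount
  have hs0 : 0 < s := by omega
  have : (s + 1) * s = s ^ 2 + s := by ring
  apply Nat.eq_of_mul_eq_mul_right hs0
  rw [this]
  exact hcount.symm

lemma steiner_block_count (s : ℕ) (hs : 2 ≤ s) (B : Finset (Finset (Fin (s ^ 2 + s + 1))))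
    (hB : IsSteiner 2 (s + 1) B) : B.card = s ^ 2 + s + 1 := by
  have hdc : ∑ p, (B.filter fun b => p ∈ b).card = ∑ b ∈ B, b.card := by
    calc ∑ p, (B.filter fun b => p ∈ b).card
        = ∑ p : Fin (s ^ 2 + s + 1), ∑ b ∈ B, if p ∈ b then 1 else 0 :=
          Finset.sum_congr rfl fun p _ => Finset.card_filter _ _
      _ = ∑ b ∈ B, ∑ p : Fin (s ^ 2 + s + 1), if p ∈ b then 1 else 0 := Finset.sum_comm
      _ = ∑ b ∈ B, b.card := by
          refine Finset.sum_congr rfl fun b _ => ?_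
          rw [← Finset.card_filter]
          congr 1
          exact Finset.filter_univ_mem b
  rw [Finset.sum_congr rfl (fun p _ => steiner_degree s hs B hB p), Finset.sum_const,
    Finset.card_univ, smul_eq_mul] at hdc
  rw [Finset.sum_congr rfl (fun b hb => hB.1 b hb), Finset.sum_const, smul_eq_mul] at hdc
  simp only [Fintype.card_fin] at hdc
  exact (Nat.eq_of_mul_eq_mul_right (by omega) hdc.symm)

lemma steiner_avoid_count (s : ℕ) (hs : 2 ≤ s) (B : Finset (Finset (Fin (s ^ 2 + s + 1))))
    (hB : IsSteiner 2 (s + 1) B) (i : Fin (s ^ 2 + s + 1)) :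
    (B.filter fun b => i ∉ b).card = s ^ 2 := by
  have h1 := Finset.card_filter_add_card_filter_not (s := B) (p := fun b => i ∈ b)
  rw [steiner_block_count s hs B hB] at h1
  have h2 := steiner_degree s hs B hB i
  have h3 : (B.filter fun b => ¬ i ∈ b).card = (B.filter fun b => i ∉ b).card := rfl
  linarith [h1, h2, h3.symm.le, h3.le]

lemma exists_code (s : ℕ) (hs : 2 ≤ s) (B : Finset (Finset (Fin (s ^ 2 + s + 1))))
    (hB : IsSteiner 2 (s + 1) B) :
    IsCWCode (s ^ 2 + s + 1) (s ^ 2 + s + 1) (s ^ 2) (s ^ 2 + s) (s ^ 2 + 1)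
      (B.image (pjCodeword B)) := by
  have hs2 : 1 ≤ s ^ 2 := by nlinarith
  have hinj : Set.InjOn (pjCodeword B) B := by
    intro b hb b' hb' heq
    ext i
    rw [← pjCodeword_eq_zero B b i, ← pjCodeword_eq_zero B b' i, heq]
  refine ⟨?_, ?_, ?_, ?_⟩
  · rw [Finset.card_image_of_injOn hinj, steiner_block_count s hs B hB]
  · rintro x hx i
    obtain ⟨b, hb, rfl⟩ := Finset.mem_image.mp hx
    unfold pjCodeword
    split
    · exact Nat.succ_pos _
    next hib =>
      have hsub : (B.filter fun c => i ∉ c ∧ Encodable.encode c < Encodable.encode b)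
          ⊆ (B.filter fun c => i ∉ c).erase b := by
        intro c hc
        obtain ⟨hcB, hic, hlt⟩ := Finset.mem_filter.mp hc
        refine Finset.mem_erase.mpr ⟨?_, Finset.mem_filter.mpr ⟨hcB, hic⟩⟩
        rintro rfl; exact lt_irrefl _ hlt
      have h2 := Finset.card_le_card hsub
      have h3 : ((B.filter fun c => i ∉ c).erase b).card = s ^ 2 - 1 := by
        rw [Finset.card_erase_of_mem (Finset.mem_filter.mpr ⟨hb, hib⟩),
          steiner_avoid_count s hs B hB i]
      have h4 : s ^ 2 - 1 + 1 = s ^ 2 := Nat.sub_add_cancel hs2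
      rw [h3] at h2
      have h5 : (B.filter fun c => i ∉ c ∧
          Encodable.encode c < Encodable.encode b).card + 1 ≤ s ^ 2 := by
        have h6 := Nat.add_le_add_right h2 1
        rw [h4] at h6
        exact h6
      exact Nat.lt_succ_of_le h5
  · rintro x hx
    obtain ⟨b, hb, rfl⟩ := Finset.mem_image.mp hx
    have hsupp : suppN (pjCodeword B b) = univ.filter fun i => i ∉ b := by
      unfold suppN
      apply Finset.filter_congr
      intro i _
      simp [pjCodeword_eq_zero]
    rw [hsupp]
    have h1 := Finset.card_filter_add_card_filter_not
      (s := (univ : Finset (Fin (s ^ 2 + s + 1)))) (p := fun i => i ∈ b)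
    have h2 : (univ.filter fun i => i ∈ b).card = s + 1 := by
      rw [Finset.filter_univ_mem]; exact hB.1 b hb
    have h3 : (univ : Finset (Fin (s ^ 2 + s + 1))).card = s ^ 2 + s + 1 := by simp
    have h5 : (s:ℕ) ^ 2 + s + 1 = s ^ 2 + (s + 1) := by ring
    linarith [h1]
  · rintro x hx y hy hxy
    obtain ⟨b, hb, rfl⟩ := Finset.mem_image.mp hx
    obtain ⟨b', hb', rfl⟩ := Finset.mem_image.mp hy
    have hbne : b ≠ b' := fun h => hxy (by rw [h])
    have hagree : (univ.filter fun i => pjCodeword B b i = pjCodeword B b' i) ⊆ b ∩ b' := by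
      intro i hi
      have hi' := (Finset.mem_filter.mp hi).2
      by_cases h1 : i ∈ b <;> by_cases h2 : i ∈ b'
      · exact Finset.mem_inter.mpr ⟨h1, h2⟩
      · exfalso
        unfold pjCodeword at hi'
        rw [if_pos h1, if_neg h2] at hi'
        exact Nat.succ_ne_zero _ hi'.symm
      · exfalso
        unfold pjCodeword at hi'
        rw [if_neg h1, if_pos h2] at hi'
        exact Nat.succ_ne_zero _ hi'
      · exfalso
        unfold pjCodeword at hi'
        rw [if_neg h1, if_neg h2] at hi'
        have hcards := Nat.succ_injective hi'
        rcases lt_trichotomy (Encodable.encode b) (Encodable.encode b') with h|h|h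
        · exact absurd hcards (Nat.ne_of_lt (pjCodeword_rank_lt B hb i h1 h))
        · exact hbne (Encodable.encode_injective h)
        · exact absurd hcards.symm (Nat.ne_of_lt (pjCodeword_rank_lt B hb' i h2 h))
    have hagc : (univ.filter fun i => pjCodeword B b i = pjCodeword B b' i).card ≤ 1 :=
      le_trans (Finset.card_le_card hagree) (steiner_inter hB hb hb' hbne)
    have h1 := Finset.card_filter_add_card_filter_not
      (s := (univ : Finset (Fin (s ^ 2 + s + 1))))
      (p := fun i => pjCodeword B b i = pjCodeword B b' i)
    have h2 : (univ.filter fun i => ¬ pjCodeword B b i = pjCodeword B b' i).card =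
        hammingDist (pjCodeword B b) (pjCodeword B b') := rfl
    have h3 : (univ : Finset (Fin (s ^ 2 + s + 1))).card = s ^ 2 + s + 1 := by simp
    linarith

/-- If a projective plane of order `s` exists (i.e., an
`S(2, s+1, s²+s+1)`), then the smallest `q` for which an
`(s²+s+1, s²+s+1, s², s²+s)_q` code exists equals `s² + 1`. -/
theorem stmt_19 (s : ℕ) (hs : 2 ≤ s)
    (B : Finset (Finset (Fin (s ^ 2 + s + 1))))
    (hB : IsSteiner 2 (s + 1) B) :
    IsLeast {q : ℕ | ∃ C : Finset (Fin (s ^ 2 + s + 1) → ℕ),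
        IsCWCode (s ^ 2 + s + 1) (s ^ 2 + s + 1) (s ^ 2) (s ^ 2 + s) q C}
      (s ^ 2 + 1) := by
  constructor
  · exact ⟨B.image (pjCodeword B), exists_code s hs B hB⟩
  · rintro q ⟨C, hC⟩
    exact lower_bound s q hs C hC
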